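/- With x^{i}_{r,t} the expected absolute endpoint of a random walk started at i with t double (±2) steps and r − 2t unit (±1) steps, and δx^{i}_{r,t} = x^{i}_{r,t} − x^{i}_{r,t−1}: if r is divisible by 4, then δx^{0}_{r,1} > δx^{0}_{r,t} for all 2 ≤ t ≤ r/2. That is, the marginal gain in expected distance from the first double step strictly exceeds that of every later double step. -/

import Mathlib

open Finset

/-- `walkExp i t m` is the expected absolute value of the endpoint of a random walk
started at `i` with `t` independent uniform ±2 steps and `m` independent uniform ±1
steps; so `x^{i}_{r,t} = walkExp i t (r - 2t)`. -/
noncomputable def walkExp (i : ℤ) (t m : ℕ) : ℝ :=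
  (∑ p : (Fin t → Bool) × (Fin m → Bool),
    |(i : ℝ) + (∑ k, (if p.1 k then (2 : ℝ) else -2)) +
      (∑ k, (if p.2 k then (1 : ℝ) else -1))|) / 2 ^ (t + m)

/-!
For even `n` the walk `X_{s,n}` with `s` double and `n` unit steps ends at even points, where
`|z + 2| + |z - 2| = 2|z| + 4·[z = 0]`. Comparing one double step with two unit steps, the gain of
the `(s+1)`-st double step is therefore the return probability `P(X_{s,n} = 0)`, with
`r = n + 2s + 2`. Trading a double step for two unit steps raises this probability by a positive
multiple of the second difference `2C(0) - C(-2) - C(2)` of the endpoint counts `C`, which two more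
unit steps turn into `2C(0) - C(-4) - C(4)`. Convolving with `δ_{-d} + δ_d` preserves being
decreasing in `|j|` along residue classes mod `2d`, so the counts have this property mod `4`
(mod `2` without double steps): the gains decrease in `s`, strictly at `s = 0`. When no unit steps
are left, `4 ∣ r` forces the endpoint to be `0 mod 4`, so `C(±2) = 0`.
-/

theorem abs_add_le_abs_sub_of_dvd {a b d : ℤ} (hd : 0 < d) (hab : 2 * d ∣ b - a) (hne : a ≠ b)
    (h : |a| ≤ |b|) : |a + d| ≤ |b - d| := by
  obtain ⟨k, hk⟩ := hab
  rw [← sq_le_sq] at h ⊢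
  have hk0 : k ≠ 0 := by rintro rfl; omega
  have hsq : b ^ 2 - a ^ 2 = 2 * d * (k * (a + b)) := by linear_combination (b + a) * hk
  have hprod : 0 ≤ k * (a + b) :=
    nonneg_of_mul_nonneg_right (a := 2 * d) (by linarith) (by positivity)
  have hgap : 0 ≤ (k - 1) * (a + b) := by
    rcases lt_or_gt_of_ne hk0 with hk' | hk' <;> nlinarith
  nlinarith

def AbsAntitoneMod (n : ℤ) (f : ℤ → ℝ) : Prop :=
  ∀ ⦃a b : ℤ⦄, a ≡ b [ZMOD n] → |a| ≤ |b| → f b ≤ f a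

namespace AbsAntitoneMod

variable {n d : ℤ} {f : ℤ → ℝ}

theorem of_dvd {n' : ℤ} (hn : n ∣ n') (hf : AbsAntitoneMod n f) : AbsAntitoneMod n' f :=
  fun _ _ hab => hf (hab.of_dvd hn)

theorem ite_eq_zero : AbsAntitoneMod n fun j => if j = 0 then 1 else 0 := by
  intro a b _ hab
  by_cases hb : b = 0
  · subst hb
    simp [abs_nonpos_iff.mp hab]
  · simp only [hb, if_false]
    positivity

/-- Compare `f (b - d)` with `f (a + d)` and `f (b + d)` with `f (a - d)`: for `a ≠ b` in the
same class, `b - a` is a nonzero multiple of `2d`, which makes these crossed pairs comparable. -/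
theorem shift_sum (hd : 0 < d) (hf : AbsAntitoneMod (2 * d) f) :
    AbsAntitoneMod (2 * d) fun j => f (j - d) + f (j + d) := by
  intro a b hab hle
  rcases eq_or_ne a b with rfl | hne
  · exact le_rfl
  have hdvd := Int.modEq_iff_dvd.mp hab
  have h₁ : a + d ≡ b - d [ZMOD 2 * d] := Int.modEq_iff_dvd.mpr <| by
    rw [show b - d - (a + d) = b - a - 2 * d by ring]
    exact dvd_sub hdvd dvd_rfl
  have h₂ : a - d ≡ b + d [ZMOD 2 * d] := Int.modEq_iff_dvd.mpr <| by
    rw [show b + d - (a - d) = b - a + 2 * d by ring]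
    exact dvd_add hdvd dvd_rfl
  have hle₂ : |a - d| ≤ |b + d| := by
    have := abs_add_le_abs_sub_of_dvd (a := -a) (b := -b) hd
      (by rw [show -b - -a = -(b - a) by ring]; exact hdvd.neg_right) (neg_injective.ne hne)
      (by simpa using hle)
    rwa [show -a + d = -(a - d) by ring, show -b - d = -(b + d) by ring, abs_neg, abs_neg] at this
  show f (b - d) + f (b + d) ≤ f (a - d) + f (a + d)
  rw [add_comm (f (a - d))]
  exact add_le_add (hf h₁ (abs_add_le_abs_sub_of_dvd hd hdvd hne hle)) (hf h₂ hle₂)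

end AbsAntitoneMod

section Walk

variable {t m : ℕ}

def endpoint (p : (Fin t → Bool) × (Fin m → Bool)) : ℤ :=
  (∑ k, if p.1 k then 2 else -2) + ∑ k, if p.2 k then 1 else -1

noncomputable def walkSum (t m : ℕ) (h : ℤ → ℝ) : ℝ :=
  ∑ p : (Fin t → Bool) × (Fin m → Bool), h (endpoint p)

noncomputable def walkCount (t m : ℕ) (j : ℤ) : ℝ :=
  walkSum t m fun z => if z = j then 1 else 0

noncomputable def returnProb (t m : ℕ) : ℝ :=
  walkCount t m 0 / 2 ^ (t + m)

theorem sum_ite_neg_modEq {n : ℕ} (c : ℤ) (g : Fin n → Bool) :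
    ∑ k, (if g k then c else -c) ≡ n * c [ZMOD 2 * c] :=
  calc ∑ k, (if g k then c else -c) ≡ ∑ _k : Fin n, c [ZMOD 2 * c] :=
        Int.ModEq.sum fun k _ => by
          split
          · rfl
          · exact Int.modEq_iff_dvd.mpr ⟨1, by ring⟩
    _ = n * c := by simp

theorem endpoint_modEq_two (p : (Fin t → Bool) × (Fin m → Bool)) :
    endpoint p ≡ m [ZMOD 2] := by
  have hdouble := ((sum_ite_neg_modEq 2 p.1).of_dvd (by norm_num : (2 : ℤ) ∣ 2 * 2))
  have hunit := sum_ite_neg_modEq 1 p.2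
  rw [mul_one] at hunit
  simpa [endpoint, Int.ModEq, Int.add_emod, Int.mul_emod_left] using hdouble.add hunit

theorem endpoint_modEq_four (p : (Fin t → Bool) × (Fin 0 → Bool)) :
    endpoint p ≡ 2 * t [ZMOD 4] := by
  simpa [endpoint, mul_comm] using sum_ite_neg_modEq 2 p.1

theorem walkSum_congr_parity {h g : ℤ → ℝ} (hg : ∀ z, z ≡ m [ZMOD 2] → h z = g z) :
    walkSum t m h = walkSum t m g :=
  Finset.sum_congr rfl fun p _ => hg _ (endpoint_modEq_two p)

theorem walkSum_add (h g : ℤ → ℝ) :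
    walkSum t m (fun z => h z + g z) = walkSum t m h + walkSum t m g :=
  Finset.sum_add_distrib

theorem walkSum_const_mul (c : ℝ) (h : ℤ → ℝ) :
    walkSum t m (fun z => c * h z) = c * walkSum t m h :=
  (Finset.mul_sum ..).symm

theorem walkSum_zero_zero (h : ℤ → ℝ) : walkSum 0 0 h = h 0 := by
  simp [walkSum, endpoint]

theorem endpoint_cons_right (f : Fin t → Bool) (b : Bool) (g : Fin m → Bool) :
    endpoint (f, (Fin.cons b g : Fin (m + 1) → Bool)) =
      endpoint (f, g) + if b then 1 else -1 := by
  simp only [endpoint, Fin.sum_univ_succ, Fin.cons_zero, Fin.cons_succ]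
  ring

theorem endpoint_cons_left (b : Bool) (f : Fin t → Bool) (g : Fin m → Bool) :
    endpoint ((Fin.cons b f : Fin (t + 1) → Bool), g) =
      endpoint (f, g) + if b then 2 else -2 := by
  simp only [endpoint, Fin.sum_univ_succ, Fin.cons_zero, Fin.cons_succ]
  ring

theorem walkSum_succ_right (h : ℤ → ℝ) :
    walkSum t (m + 1) h = walkSum t m fun z => h (z + 1) + h (z - 1) := by
  unfold walkSum
  rw [Fintype.sum_prod_type, Fintype.sum_prod_type]
  refine Finset.sum_congr rfl fun f _ => ?_
  rw [← (Fin.consEquiv fun _ => Bool).sum_comp, Fintype.sum_prod_type, Fintype.sum_bool,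
    ← Finset.sum_add_distrib]
  refine Finset.sum_congr rfl fun g _ => ?_
  simp [Fin.consEquiv, endpoint_cons_right, sub_eq_add_neg]

theorem walkSum_succ_left (h : ℤ → ℝ) :
    walkSum (t + 1) m h = walkSum t m fun z => h (z + 2) + h (z - 2) := by
  unfold walkSum
  rw [Fintype.sum_prod_type, Fintype.sum_prod_type,
    ← (Fin.consEquiv fun _ => Bool).sum_comp, Fintype.sum_prod_type, Fintype.sum_bool,
    ← Finset.sum_add_distrib]
  refine Finset.sum_congr rfl fun f _ => ?_
  rw [← Finset.sum_add_distrib]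
  refine Finset.sum_congr rfl fun g _ => ?_
  simp [Fin.consEquiv, endpoint_cons_left, sub_eq_add_neg]

theorem walkSum_add_two (h : ℤ → ℝ) :
    walkSum t (m + 2) h = walkSum t m fun z => h (z + 2) + h (z - 2) + 2 * h z := by
  rw [walkSum_succ_right, walkSum_succ_right]
  congr 1
  funext z
  rw [show z + 1 + 1 = z + 2 by ring, add_sub_cancel_right, sub_add_cancel,
    show z - 1 - 1 = z - 2 by ring]
  ring

end Walk

theorem walkCount_nonneg (t m : ℕ) (j : ℤ) : 0 ≤ walkCount t m j :=
  Finset.sum_nonneg fun _ _ => by positivity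

theorem walkCount_zero_zero : walkCount 0 0 = fun j => if j = 0 then 1 else 0 := by
  ext j
  simp [walkCount, walkSum_zero_zero, eq_comm]

theorem walkCount_succ_right (t m : ℕ) (j : ℤ) :
    walkCount t (m + 1) j = walkCount t m (j - 1) + walkCount t m (j + 1) := by
  rw [walkCount, walkSum_succ_right, walkSum_add]
  simp only [walkCount, ← eq_sub_iff_add_eq, sub_eq_iff_eq_add]

theorem walkCount_succ_left (t m : ℕ) (j : ℤ) :
    walkCount (t + 1) m j = walkCount t m (j - 2) + walkCount t m (j + 2) := by
  rw [walkCount, walkSum_succ_left, walkSum_add]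
  simp only [walkCount, ← eq_sub_iff_add_eq, sub_eq_iff_eq_add]

theorem walkCount_add_two (t m : ℕ) (j : ℤ) :
    walkCount t (m + 2) j =
      walkCount t m (j - 2) + 2 * walkCount t m j + walkCount t m (j + 2) := by
  rw [walkCount_succ_right, walkCount_succ_right, walkCount_succ_right]
  ring_nf

theorem walkCount_eq_zero_of_not_modEq_four {t : ℕ} {j : ℤ} (hj : ¬ j ≡ 2 * t [ZMOD 4]) :
    walkCount t 0 j = 0 :=
  Finset.sum_eq_zero fun p _ => if_neg fun hp : endpoint p = j => hj (hp ▸ endpoint_modEq_four p)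

theorem absAntitoneMod_two_walkCount_zero (m : ℕ) : AbsAntitoneMod 2 (walkCount 0 m) := by
  induction m with
  | zero => exact walkCount_zero_zero ▸ AbsAntitoneMod.ite_eq_zero
  | succ m ih =>
    rw [funext (walkCount_succ_right 0 m)]
    exact AbsAntitoneMod.shift_sum (d := 1) one_pos ih

theorem absAntitoneMod_four_walkCount (t m : ℕ) : AbsAntitoneMod 4 (walkCount t m) := by
  induction t with
  | zero => exact (absAntitoneMod_two_walkCount_zero m).of_dvd (by norm_num)
  | succ t ih =>
    rw [funext (walkCount_succ_left t m)]
    exact AbsAntitoneMod.shift_sum (d := 2) two_pos ih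

theorem walkCount_second_diff_add_two (t m : ℕ) :
    2 * walkCount t (m + 2) 0 - walkCount t (m + 2) (-2) - walkCount t (m + 2) 2 =
      2 * walkCount t m 0 - walkCount t m (-4) - walkCount t m 4 := by
  rw [walkCount_add_two, walkCount_add_two, walkCount_add_two]
  ring_nf

theorem walkCount_neg_two_add_two_le {s n : ℕ} (h4 : 4 ∣ n + 2 * s) :
    walkCount s n (-2) + walkCount s n 2 ≤ 2 * walkCount s n 0 := by
  obtain _ | _ | n := n
  · have hmod : ∀ j : ℤ, j = 2 ∨ j = -2 → ¬ j ≡ 2 * s [ZMOD 4] := by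
      unfold Int.ModEq
      omega
    rw [walkCount_eq_zero_of_not_modEq_four (hmod _ (.inr rfl)),
      walkCount_eq_zero_of_not_modEq_four (hmod _ (.inl rfl))]
    linarith [walkCount_nonneg s 0 0]
  · omega
  · have hanti := absAntitoneMod_four_walkCount s n
    have h₁ : walkCount s n 4 ≤ walkCount s n 0 := hanti (by decide) (by norm_num)
    have h₂ : walkCount s n (-4) ≤ walkCount s n 0 := hanti (by decide) (by norm_num)
    linarith [walkCount_second_diff_add_two s n]

theorem walkCount_zero_neg_two_add_two_lt (k : ℕ) :
    walkCount 0 (2 * k) (-2) + walkCount 0 (2 * k) 2 < 2 * walkCount 0 (2 * k) 0 := by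
  induction k with
  | zero => norm_num [walkCount_zero_zero]
  | succ k ih =>
    rw [show 2 * (k + 1) = 2 * k + 2 by ring]
    have hanti := absAntitoneMod_two_walkCount_zero (2 * k)
    have h₁ : walkCount 0 (2 * k) 4 ≤ walkCount 0 (2 * k) 2 := hanti (by decide) (by norm_num)
    have h₂ : walkCount 0 (2 * k) (-4) ≤ walkCount 0 (2 * k) (-2) :=
      hanti (by decide) (by norm_num)
    linarith [walkCount_second_diff_add_two 0 (2 * k)]

theorem returnProb_add_two_sub_returnProb_succ (s n : ℕ) :
    returnProb s (n + 2) - returnProb (s + 1) n =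
      (2 * walkCount s n 0 - walkCount s n (-2) - walkCount s n 2) / 2 ^ (s + n + 2) := by
  rw [returnProb, returnProb, walkCount_add_two, walkCount_succ_left, zero_sub, zero_add]
  field_simp
  ring

theorem returnProb_succ_le {s n : ℕ} (h4 : 4 ∣ n + 2 * s) :
    returnProb (s + 1) n ≤ returnProb s (n + 2) := by
  rw [← sub_nonneg, returnProb_add_two_sub_returnProb_succ]
  have := walkCount_neg_two_add_two_le h4
  exact div_nonneg (by linarith) (by positivity)

theorem returnProb_one_lt {n : ℕ} (hn : Even n) : returnProb 1 n < returnProb 0 (n + 2) := by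
  obtain ⟨k, rfl⟩ := hn
  rw [← sub_pos, returnProb_add_two_sub_returnProb_succ, ← two_mul]
  have := walkCount_zero_neg_two_add_two_lt k
  exact div_pos (by linarith) (by positivity)

/-- The length `n + 2s + 2` is invariant along the chain `(s, n) → (s - 1, n + 2) → ⋯`. -/
theorem returnProb_lt_returnProb_zero {s n : ℕ} (hs : 1 ≤ s) (h4 : 4 ∣ n + 2 * s + 2) :
    returnProb s n < returnProb 0 (n + 2 * s) := by
  induction s, hs using Nat.le_induction generalizing n with
  | base => exact returnProb_one_lt (by rw [Nat.even_iff]; omega)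
  | succ s hs ih =>
    calc returnProb (s + 1) n ≤ returnProb s (n + 2) := returnProb_succ_le (by omega)
      _ < returnProb 0 (n + 2 + 2 * s) := ih (by omega)
      _ = returnProb 0 (n + 2 * (s + 1)) := by ring_nf

theorem abs_add_two_add_abs_sub_two_of_even {z : ℤ} (hz : Even z) :
    |z + 2| + |z - 2| = 2 * |z| + if z = 0 then 4 else 0 := by
  obtain ⟨k, rfl⟩ := hz
  simp only [abs_eq_max_neg]
  split_ifs <;> omega

theorem walkExp_zero_eq (t m : ℕ) :
    walkExp 0 t m = walkSum t m (fun z => |(z : ℝ)|) / 2 ^ (t + m) := by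
  simp [walkExp, walkSum, endpoint, apply_ite (Int.cast : ℤ → ℝ)]

theorem walkExp_succ_sub_walkExp {s m : ℕ} (hm : Even m) :
    walkExp 0 (s + 1) m - walkExp 0 s (m + 2) = returnProb s m := by
  have hpair : ∀ z : ℤ, z ≡ m [ZMOD 2] →
      |((z + 2 : ℤ) : ℝ)| + |((z - 2 : ℤ) : ℝ)| =
        2 * |(z : ℝ)| + 4 * if z = 0 then 1 else 0 := by
    intro z hzm
    have hz : Even z := by
      rw [Nat.even_iff] at hm
      unfold Int.ModEq at hzm
      rw [Int.even_iff]
      omega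
    have := abs_add_two_add_abs_sub_two_of_even hz
    obtain rfl | hz0 := eq_or_ne z 0
    · norm_num
    · rw [if_neg hz0, add_zero] at this
      rw [if_neg hz0, mul_zero, add_zero]
      exact_mod_cast this
  have hdouble : (walkSum s m fun z => |((z + 2 : ℤ) : ℝ)| + |((z - 2 : ℤ) : ℝ)|) =
      2 * walkSum s m (fun z => |(z : ℝ)|) + 4 * walkCount s m 0 := by
    rw [walkSum_congr_parity hpair, walkSum_add, walkSum_const_mul, walkSum_const_mul]
    rfl
  rw [walkExp_zero_eq, walkExp_zero_eq, walkSum_succ_left, hdouble, walkSum_add_two, walkSum_add,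
    hdouble, walkSum_const_mul, returnProb]
  field_simp
  ring

/-- If `4 ∣ r`, then `δx^{0}_{r,1} > δx^{0}_{r,t}` for all `2 ≤ t ≤ r/2`, where
`δx^{0}_{r,t} = x^{0}_{r,t} − x^{0}_{r,t−1}`: the marginal gain in expected distance
from the first double step strictly exceeds that of every later double step. -/
theorem walkExp_first_double_step_best (r t : ℕ) (h4 : 4 ∣ r) (ht : 2 ≤ t)
    (htr : 2 * t ≤ r) :
    walkExp 0 t (r - 2 * t) - walkExp 0 (t - 1) (r - 2 * (t - 1)) <
      walkExp 0 1 (r - 2) - walkExp 0 0 r := by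
  obtain ⟨s, rfl⟩ : ∃ s, t = s + 1 := ⟨t - 1, by omega⟩
  obtain ⟨n, rfl⟩ : ∃ n, r = n + 2 * s + 2 := ⟨r - 2 * s - 2, by omega⟩
  have hn : Even n := by rw [Nat.even_iff]; omega
  have hfirst : walkExp 0 1 (n + 2 * s) - walkExp 0 0 (n + 2 * s + 2) = returnProb 0 (n + 2 * s) :=
    walkExp_succ_sub_walkExp (s := 0) (by rw [Nat.even_iff]; omega)
  rw [show n + 2 * s + 2 - 2 * (s + 1) = n by omega, show s + 1 - 1 = s by omega,
    show n + 2 * s + 2 - 2 * s = n + 2 by omega, show n + 2 * s + 2 - 2 = n + 2 * s by omega,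
    walkExp_succ_sub_walkExp hn, hfirst]
  exact returnProb_lt_returnProb_zero (by omega) h4
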